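/- Let G be a group with elements g₂,…,g₅ and integers t₂₃₄, t₂₃₅, t₂₄₅, t₃₄₅ satisfying the listed commutator relations. Then for all integers x, y: g₃^x g₂^y = g₂^y g₃^x g₄^{x y t₂₃₄} g₅^{s₂(x) y t₂₃₄ t₃₄₅ + x y t₂₃₅ + x s₂(y) t₂₃₄ t₂₄₅}. -/

import Mathlib

/-!
Let `σ` be conjugation `g ↦ g₂⁻¹ g g₂`. It fixes `g₅`, sends `g₄ ↦ g₄ g₅^t₂₄₅` and
`g₃ ↦ g₃ g₄^t₂₃₄ g₅^t₂₃₅`, so iterating gives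
`σ^y g₃ = g₃ g₄^(y t₂₃₄) g₅^(y t₂₃₅ + s₂(y) t₂₃₄ t₂₄₅)`, the `s₂(y)` collecting the `g₅`'s
produced each time `σ` moves the accumulated power of `g₄`. Then `g₂^-y g₃^x g₂^y = (σ^y g₃)^x`,
and since `g₄^k` commutes with `g₃` up to `g₅^(k t₃₄₅)`, which commutes with both, the power
`(g₃ g₄^k)^x` is `g₃^x g₄^(kx) g₅^(s₂(x) k t₃₄₅)`.
-/

/-- `s₂(x) = x(x-1)/2` -/
def s2 (x : ℤ) : ℤ := x * (x - 1) / 2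

theorem two_mul_s2 (x : ℤ) : 2 * s2 x = x * (x - 1) :=
  Int.mul_ediv_cancel' (Int.even_mul_pred_self x).two_dvd

theorem s2_add_one (x : ℤ) : s2 (x + 1) = s2 x + x := by
  linarith [two_mul_s2 x, two_mul_s2 (x + 1)]

theorem s2_sub_one (x : ℤ) : s2 (x - 1) = s2 x - (x - 1) := by
  linarith [two_mul_s2 x, two_mul_s2 (x - 1)]

namespace MulAut

variable {G : Type*} [Group G]

theorem zpow_apply_of_apply_eq_self {φ : MulAut G} {c : G} (hc : φ c = c) (n : ℤ) :
    (φ ^ n) c = c :=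
  (MulAction.stabilizer (MulAut G) c).zpow_mem (x := φ) hc n

theorem apply_zpow_of_apply_eq_mul {φ : MulAut G} {a c : G} (hac : Commute a c)
    (ha : φ a = a * c) (k : ℤ) : φ (a ^ k) = a ^ k * c ^ k := by
  rw [map_zpow, ha, hac.mul_zpow]

theorem conj_inv_apply_of_inv_mul_inv_mul_mul_eq {a b r : G} (h : a⁻¹ * b⁻¹ * a * b = r) :
    (conj b)⁻¹ a = a * r := by
  rw [conj_inv_apply, ← h]
  group

theorem zpow_apply_of_apply_eq_mul {φ : MulAut G} {a c : G} (ha : φ a = a * c)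
    (hc : φ c = c) (n : ℤ) : (φ ^ n) a = a * c ^ n := by
  have hc' := zpow_apply_of_apply_eq_self hc
  induction n using Int.induction_on with
  | zero => simp
  | succ n ih => rw [zpow_add_one, mul_apply, ha, map_mul, ih, hc', zpow_add_one, mul_assoc]
  | pred n ih =>
    have hinv : φ⁻¹ a = a * c⁻¹ := by
      rw [inv_apply, MulEquiv.symm_apply_eq, map_mul, ha, map_inv, hc, mul_inv_cancel_right]
    rw [zpow_sub_one, mul_apply, hinv, map_mul, ih, map_inv, hc', zpow_sub_one, mul_assoc]

theorem zpow_apply_of_apply_eq_mul_mul {φ : MulAut G} {a b c : G} {r s : ℤ} (hbc : Commute b c)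
    (ha : φ a = a * b * c ^ s) (hb : φ b = b * c ^ r) (hc : φ c = c) (n : ℤ) :
    (φ ^ n) a = a * b ^ n * c ^ (n * s + s2 n * r) := by
  have hc' (k : ℤ) : φ (c ^ k) = c ^ k := by rw [map_zpow, hc]
  have hcn (k n : ℤ) : (φ ^ n) (c ^ k) = c ^ k := zpow_apply_of_apply_eq_self (hc' k) n
  have hbn (n : ℤ) : (φ ^ n) b = b * c ^ (r * n) := by
    rw [zpow_apply_of_apply_eq_mul hb (hc' r), zpow_mul]
  have swap (k : ℤ) (x : G) : c ^ k * (b * x) = b * (c ^ k * x) := by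
    rw [← mul_assoc, ← (hbc.zpow_right k).eq, mul_assoc]
  have swap_inv (k : ℤ) (x : G) : c ^ k * (b⁻¹ * x) = b⁻¹ * (c ^ k * x) := by
    rw [← mul_assoc, ← (hbc.zpow_right k).inv_left.eq, mul_assoc]
  induction n using Int.induction_on with
  | zero => simp [s2]
  | succ n ih =>
    rw [zpow_add_one, mul_apply, ha, map_mul, map_mul, ih, hbn, hcn, s2_add_one]
    simp only [mul_assoc, swap]
    group
  | pred n ih =>
    have hinv : φ⁻¹ a = a * b⁻¹ * c ^ (r - s) := by
      rw [inv_apply, MulEquiv.symm_apply_eq, map_mul, map_mul, ha, map_inv, hb, hc', mul_inv_rev,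
        ← zpow_neg]
      simp only [mul_assoc, swap_inv]
      group
    rw [zpow_sub_one, mul_apply, hinv, map_mul, map_mul, ih, map_inv, hbn, hcn, s2_sub_one,
      mul_inv_rev, ← zpow_neg]
    simp only [mul_assoc, swap_inv]
    group

end MulAut

section

variable {G : Type*} [Group G]

theorem mul_zpow_of_conj_inv_apply_eq_mul {a d e : G} (hea : Commute e a) (hed : Commute e d)
    (h : (MulAut.conj a)⁻¹ d = d * e) (n : ℤ) : (a * d) ^ n = a ^ n * d ^ n * e ^ s2 n := by
  have hda (m : ℤ) : d * a ^ m = a ^ m * (d * e ^ m) := by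
    have he : (MulAut.conj a)⁻¹ e = e := by
      rw [MulAut.conj_inv_apply, mul_assoc, hea.eq, inv_mul_cancel_left]
    have := MulAut.zpow_apply_of_apply_eq_mul h he m
    rw [inv_zpow, ← map_zpow, MulAut.conj_inv_apply] at this
    rw [← this]
    group
  have hdinv_a (m : ℤ) : d⁻¹ * a ^ m = a ^ m * (e ^ (-m) * d⁻¹) :=
    calc d⁻¹ * a ^ m = d⁻¹ * (a ^ m * (d * e ^ m)) * e ^ (-m) * d⁻¹ := by group
      _ = a ^ m * (e ^ (-m) * d⁻¹) := by rw [← hda]; group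
  have swap (k m : ℤ) (x : G) : e ^ k * (d ^ m * x) = d ^ m * (e ^ k * x) := by
    rw [← mul_assoc, (hed.zpow_zpow k m).eq, mul_assoc]
  induction n using Int.induction_on with
  | zero => simp [s2]
  | succ n ih =>
    rw [← mul_self_zpow, ih, s2_add_one]
    simp only [mul_assoc]
    rw [← mul_assoc d, hda]
    simp only [mul_assoc, swap]
    group
  | pred n ih =>
    rw [sub_eq_neg_add, zpow_add, zpow_neg_one, ih, ← sub_eq_neg_add, s2_sub_one, mul_inv_rev]
    simp only [mul_assoc]
    rw [← mul_assoc a⁻¹, ← zpow_neg_one a, ← zpow_add, ← mul_assoc d⁻¹, hdinv_a]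
    simp only [mul_assoc]
    rw [← mul_assoc d⁻¹, ← zpow_neg_one d, ← zpow_add, swap]
    group

theorem commute_of_inv_mul_inv_mul_mul_eq_one {a b : G} (h : a⁻¹ * b⁻¹ * a * b = 1) :
    Commute a b := by
  rw [← Commute.inv_inv_iff, ← commutatorElement_eq_one_iff_commute, commutatorElement_def,
    inv_inv, inv_inv, h]

end

/-- Commutation formula
`g₃^x g₂^y = g₂^y g₃^x g₄^{xy t₂₃₄} g₅^{s₂(x) y t₂₃₄ t₃₄₅ + xy t₂₃₅ + x s₂(y) t₂₃₄ t₂₄₅}`. -/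
theorem g3_g2_power_commutation (G : Type*) [Group G] (g2 g3 g4 g5 : G)
    (t234 t235 t245 t345 : ℤ)
    (h32 : g3⁻¹ * g2⁻¹ * g3 * g2 = g4 ^ t234 * g5 ^ t235)
    (h42 : g4⁻¹ * g2⁻¹ * g4 * g2 = g5 ^ t245)
    (h43 : g4⁻¹ * g3⁻¹ * g4 * g3 = g5 ^ t345)
    (h52 : g5⁻¹ * g2⁻¹ * g5 * g2 = 1)
    (h53 : g5⁻¹ * g3⁻¹ * g5 * g3 = 1)
    (h54 : g5⁻¹ * g4⁻¹ * g5 * g4 = 1) :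
    ∀ x y : ℤ,
      g3 ^ x * g2 ^ y
        = g2 ^ y * g3 ^ x * g4 ^ (x * y * t234)
            * g5 ^ (s2 x * y * t234 * t345 + x * y * t235 + x * s2 y * t234 * t245) := by
  intro x y
  have c3 := commute_of_inv_mul_inv_mul_mul_eq_one h53
  have c4 := commute_of_inv_mul_inv_mul_mul_eq_one h54
  set σ := (MulAut.conj g2)⁻¹
  have hσ3 : σ g3 = g3 * g4 ^ t234 * g5 ^ t235 := by
    rw [MulAut.conj_inv_apply_of_inv_mul_inv_mul_mul_eq h32, mul_assoc]
  have hσ4 : σ (g4 ^ t234) = g4 ^ t234 * g5 ^ (t245 * t234) := by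
    rw [MulAut.apply_zpow_of_apply_eq_mul (c4.zpow_left _).symm
      (MulAut.conj_inv_apply_of_inv_mul_inv_mul_mul_eq h42), zpow_mul]
  have hσ5 : σ g5 = g5 := by
    rw [MulAut.conj_inv_apply_of_inv_mul_inv_mul_mul_eq h52, mul_one]
  have hσy := MulAut.zpow_apply_of_apply_eq_mul_mul (c4.zpow_right t234).symm hσ3 hσ4 hσ5 y
  have hg3g4 :
      (MulAut.conj g3)⁻¹ (g4 ^ (t234 * y)) = g4 ^ (t234 * y) * (g5 ^ t345) ^ (t234 * y) :=
    MulAut.apply_zpow_of_apply_eq_mul (c4.zpow_left t345).symm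
      (MulAut.conj_inv_apply_of_inv_mul_inv_mul_mul_eq h43) _
  have hpow := mul_zpow_of_conj_inv_apply_eq_mul ((c3.zpow_left _).zpow_left _)
    ((c4.zpow_left _).zpow_left _ |>.zpow_right _) hg3g4 x
  calc g3 ^ x * g2 ^ y = g2 ^ y * (σ ^ y) (g3 ^ x) := by
        rw [inv_zpow, ← map_zpow, MulAut.conj_inv_apply]
        group
    _ = _ := by
        rw [map_zpow, hσy, ← zpow_mul,
          (((c3.mul_right (c4.zpow_right _)).zpow_left _).symm).mul_zpow, hpow]
        group
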